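/- arXiv:1504.07124 — 4 statements merged into one kernel-verified Lean document; each statement's English description precedes it below -/
import Mathlib

section
/- The function E(t) = (3(1 − p_inv)e^{−θt}(1 − e^{−4t/(3(1 − p_inv))})) / (4(p_inv + (1 − p_inv)e^{−θt})), for p_inv ∈ (0,1) and θ > 0, is not monotonically increasing on [0, ∞): there exist 0 < t₁ < t₂ with E(t₁) > E(t₂). -/
/-!
`E` is positive for `t > 0`, and `E(t) → 0` as `t → ∞` because the factor `e^{-θt}` kills the
numerator while the denominator tends to `4 p_inv > 0`; hence `E` eventually drops below `E(1)`.
-/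

open Filter Topology

/-- `p` is the paper's `p_inv`. -/
noncomputable def pairedInvariantsDistance (p θ t : ℝ) : ℝ :=
  3 * (1 - p) * Real.exp (-θ * t) * (1 - Real.exp (-4 * t / (3 * (1 - p)))) /
    (4 * (p + (1 - p) * Real.exp (-θ * t)))

lemma exists_lt_of_pos_of_tendsto_zero {f : ℝ → ℝ} {a : ℝ} (ha : 0 < f a)
    (hf : Tendsto f atTop (𝓝 0)) : ∃ b, a < b ∧ f b < f a :=
  ((hf.eventually (gt_mem_nhds ha)).and (eventually_gt_atTop a)).exists.imp
    fun _ hb => ⟨hb.2, hb.1⟩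

lemma tendsto_exp_neg_mul_atTop {c : ℝ} (hc : 0 < c) :
    Tendsto (fun t => Real.exp (-c * t)) atTop (𝓝 0) :=
  Real.tendsto_exp_atBot.comp (tendsto_id.const_mul_atTop_of_neg (neg_neg_of_pos hc))

section

variable {p θ : ℝ}

lemma pairedInvariantsDistance_pos (hp0 : 0 ≤ p) (hp1 : p < 1) {t : ℝ} (ht : 0 < t) :
    0 < pairedInvariantsDistance p θ t := by
  have h1p : 0 < 1 - p := sub_pos.mpr hp1
  have hexp_lt_one : Real.exp (-4 * t / (3 * (1 - p))) < 1 :=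
    Real.exp_lt_one_iff.mpr (div_neg_of_neg_of_pos (by linarith) (by positivity))
  have := sub_pos.mpr hexp_lt_one
  unfold pairedInvariantsDistance
  positivity

lemma tendsto_pairedInvariantsDistance_atTop (hp0 : 0 < p) (hp1 : p < 1) (hθ : 0 < θ) :
    Tendsto (pairedInvariantsDistance p θ) atTop (𝓝 0) := by
  have h1p : 0 < 1 - p := sub_pos.mpr hp1
  have hexp := tendsto_exp_neg_mul_atTop hθ
  have hexp' : Tendsto (fun t => Real.exp (-4 * t / (3 * (1 - p)))) atTop (𝓝 0) :=
    (tendsto_exp_neg_mul_atTop (c := 4 / (3 * (1 - p))) (by positivity)).congr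
      fun t => by ring_nf
  have hnum : Tendsto (fun t => 3 * (1 - p) * Real.exp (-θ * t) *
      (1 - Real.exp (-4 * t / (3 * (1 - p))))) atTop (𝓝 (3 * (1 - p) * 0 * (1 - 0))) :=
    (tendsto_const_nhds.mul hexp).mul (tendsto_const_nhds.sub hexp')
  have hden : Tendsto (fun t => 4 * (p + (1 - p) * Real.exp (-θ * t))) atTop
      (𝓝 (4 * (p + (1 - p) * 0))) :=
    tendsto_const_nhds.mul (tendsto_const_nhds.add (tendsto_const_nhds.mul hexp))
  have := hnum.div hden (by positivity)
  rwa [mul_zero, zero_mul, zero_div] at this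

end

/-- The expected p-distance of the paired invariants model is not monotonically
increasing: there exist `0 < t₁ < t₂` with `E(t₁) > E(t₂)`. -/
theorem stmt_12 (p θ : ℝ) (hp : p ∈ Set.Ioo (0 : ℝ) 1) (hθ : 0 < θ)
    (E : ℝ → ℝ)
    (hE : ∀ t, E t = 3 * (1 - p) * Real.exp (-θ * t) *
        (1 - Real.exp (-4 * t / (3 * (1 - p)))) /
        (4 * (p + (1 - p) * Real.exp (-θ * t)))) :
    ∃ t₁ t₂ : ℝ, 0 < t₁ ∧ t₁ < t₂ ∧ E t₂ < E t₁ := by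
  obtain ⟨hp0, hp1⟩ := hp
  have hE : E = pairedInvariantsDistance p θ := funext hE
  subst hE
  obtain ⟨t₂, h12, hlt⟩ := exists_lt_of_pos_of_tendsto_zero
    (pairedInvariantsDistance_pos (θ := θ) hp0.le hp1 one_pos)
    (tendsto_pairedInvariantsDistance_atTop hp0 hp1 hθ)
  exact ⟨1, t₂, one_pos, h12, hlt⟩
end

section
/- Fix p_inv ∈ (0,1) and θ > 0, and let h(t) = (−3(1 − p_inv)/4) · ln(1 − e^{−θt}(1 − e^{−4t/(3(1 − p_inv))}) / (p_inv + (1 − p_inv)e^{−θt})). Then h''(0) = −2·p_inv·θ. In particular, h''(0) < 0 whenever p_inv > 0 and θ > 0, so h is strictly concave on some interval [s/2, s] with s > 0. -/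
/-!
With `c = 4 / (3 (1 - p))` the argument of the logarithm is `N / D`, where
`N t = p - p e^{-θt} + e^{-(θ+c)t}` and `D t = p + (1 - p) e^{-θt}` are positive sums of
exponentials with `N 0 = D 0 = 1`. Hence `h = -(log N - log D) / c` is smooth, and
`(log f)'' = (f'' f - f'^2) / f^2` gives `(log N)''(0) - (log D)''(0) = 2 p θ c`, so
`h''(0) = -2 p θ`. By continuity `h''` stays negative near `0`, so `h` is strictly concave on
`[s/2, s]` for small `s > 0`.
-/

open Real Set

noncomputable def expSum (a b₁ r₁ b₂ r₂ t : ℝ) : ℝ := a + b₁ * exp (r₁ * t) + b₂ * exp (r₂ * t)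

section expSum

variable (a b₁ r₁ b₂ r₂ : ℝ)

@[simp]
lemma expSum_zero : expSum a b₁ r₁ b₂ r₂ 0 = a + b₁ + b₂ := by
  simp [expSum]

lemma hasDerivAt_expSum (t : ℝ) :
    HasDerivAt (expSum a b₁ r₁ b₂ r₂) (expSum 0 (b₁ * r₁) r₁ (b₂ * r₂) r₂ t) t := by
  have hexp (r : ℝ) : HasDerivAt (fun t => exp (r * t)) (exp (r * t) * r) t := by
    simpa using ((hasDerivAt_id t).const_mul r).exp
  refine ((((hexp r₁).const_mul b₁).const_add a).fun_add ((hexp r₂).const_mul b₂)).congr_deriv ?_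
  simp only [expSum]
  ring

lemma contDiff_expSum {n : WithTop ℕ∞} : ContDiff ℝ n (expSum a b₁ r₁ b₂ r₂) := by
  unfold expSum
  fun_prop

variable {a b₁ b₂}

lemma expSum_pos (ha : 0 < a) (hb₁ : 0 ≤ b₁) (hb₂ : 0 ≤ b₂) (t : ℝ) :
    0 < expSum a b₁ r₁ b₂ r₂ t := by
  unfold expSum
  positivity

end expSum

lemma iteratedDeriv_two_log_comp {f f' f'' : ℝ → ℝ} (hf : ∀ t, HasDerivAt f (f' t) t)
    (hf' : ∀ t, HasDerivAt f' (f'' t) t) (hne : ∀ t, f t ≠ 0) :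
    iteratedDeriv 2 (fun t => log (f t)) = fun t => (f'' t * f t - f' t ^ 2) / f t ^ 2 := by
  have hlog : deriv (fun t => log (f t)) = fun t => f' t / f t :=
    funext fun t => ((hf t).log (hne t)).deriv
  rw [iteratedDeriv_succ, iteratedDeriv_one, hlog]
  exact funext fun t => ((hf' t).div (hf t) (hne t)).deriv.trans (by ring)

lemma iteratedDeriv_two_log_expSum_zero {a b₁ r₁ b₂ r₂ : ℝ}
    (hne : ∀ t, expSum a b₁ r₁ b₂ r₂ t ≠ 0) :
    iteratedDeriv 2 (fun t => log (expSum a b₁ r₁ b₂ r₂ t)) 0 =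
      ((b₁ * r₁ * r₁ + b₂ * r₂ * r₂) * (a + b₁ + b₂) - (b₁ * r₁ + b₂ * r₂) ^ 2) /
        (a + b₁ + b₂) ^ 2 := by
  rw [iteratedDeriv_two_log_comp (hasDerivAt_expSum _ _ _ _ _) (hasDerivAt_expSum _ _ _ _ _) hne]
  simp

lemma pairedNumerator_pos {p θ c : ℝ} (hp0 : 0 ≤ p) (hp1 : p ≤ 1) (hθ : 0 ≤ θ) (hc : 0 ≤ c)
    (t : ℝ) : 0 < expSum p (-p) (-θ) 1 (-(θ + c)) t := by
  have hsplit : exp (-(θ + c) * t) = exp (-θ * t) * exp (-c * t) := by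
    rw [← exp_add]; ring_nf
  have hx := exp_pos (-θ * t)
  have hy := exp_pos (-c * t)
  simp only [expSum, hsplit]
  rcases le_or_gt 0 t with ht | ht
  · -- `p (1 - e^{-θt}) ≥ 0`
    have : exp (-θ * t) ≤ 1 := exp_le_one_iff.2 (by nlinarith)
    nlinarith [mul_pos hx hy]
  · -- `p + e^{-θt} (e^{-ct} - p)` with `e^{-ct} ≥ 1 ≥ p`
    have : 1 ≤ exp (-c * t) := one_le_exp_iff.2 (by nlinarith)
    nlinarith [mul_nonneg hx.le (sub_nonneg.2 (hp1.trans this))]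

lemma ContDiff.exists_strictConcaveOn_Icc_of_iteratedDeriv_two_neg {f : ℝ → ℝ} {x : ℝ}
    (hf : ContDiff ℝ 2 f) (hx : iteratedDeriv 2 f x < 0) :
    ∃ ε > 0, StrictConcaveOn ℝ (Icc (x - ε) (x + ε)) f := by
  obtain ⟨δ, hδ, hneg⟩ := Metric.eventually_nhds_iff.1
    ((hf.continuous_iteratedDeriv 2 le_rfl).tendsto x |>.eventually_lt_const hx)
  refine ⟨δ / 2, by positivity, strictConcaveOn_of_deriv2_neg (convex_Icc _ _)
    hf.continuous.continuousOn fun y hy => ?_⟩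
  rw [interior_Icc] at hy
  rw [← iteratedDeriv_eq_iterate]
  refine hneg ?_
  rw [Real.dist_eq, abs_lt]
  constructor <;> linarith [hy.1, hy.2]

/-- The second derivative at 0 of the transformed distance of the paired invariants
model is `-2 p_inv θ < 0`, so `h` is strictly concave on some interval `[s/2, s]`. -/
theorem stmt_14 (p θ : ℝ) (hp : p ∈ Set.Ioo (0 : ℝ) 1) (hθ : 0 < θ)
    (h : ℝ → ℝ)
    (hh : ∀ t, h t = -3 * (1 - p) / 4 *
        Real.log (1 - Real.exp (-θ * t) * (1 - Real.exp (-4 * t / (3 * (1 - p)))) /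
          (p + (1 - p) * Real.exp (-θ * t)))) :
    iteratedDeriv 2 h 0 = -2 * p * θ ∧ iteratedDeriv 2 h 0 < 0 ∧
      ∃ s : ℝ, 0 < s ∧ StrictConcaveOn ℝ (Set.Icc (s / 2) s) h := by
  obtain ⟨hp0, hp1⟩ := hp
  have h1p : 0 < 1 - p := by linarith
  set c := 4 / (3 * (1 - p)) with hc
  set N := expSum p (-p) (-θ) 1 (-(θ + c))
  set D := expSum p (1 - p) (-θ) 0 0
  have hN : ∀ t, N t ≠ 0 := fun t =>
    (pairedNumerator_pos hp0.le hp1.le hθ.le (by positivity) t).ne'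
  have hD : ∀ t, D t ≠ 0 := fun t => (expSum_pos _ _ hp0 h1p.le le_rfl t).ne'
  have hform : h = fun t => -3 * (1 - p) / 4 * (log (N t) - log (D t)) := by
    funext t
    have hexp : exp (-4 * t / (3 * (1 - p))) = exp (-c * t) := by
      rw [hc]; congr 1; field_simp
    have hsplit : exp (-(θ + c) * t) = exp (-θ * t) * exp (-c * t) := by
      rw [← exp_add]; ring_nf
    have hratio : 1 - exp (-θ * t) * (1 - exp (-c * t)) / (p + (1 - p) * exp (-θ * t)) =
        N t / D t := by
      rw [eq_div_iff (hD t)]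
      simp only [N, D, expSum, hsplit]
      field_simp
      ring
    rw [hh, hexp, hratio, log_div (hN t) (hD t)]
  have hsmooth : ContDiff ℝ 2 h := by
    rw [hform]
    exact contDiff_const.mul (((contDiff_expSum ..).log hN).sub ((contDiff_expSum ..).log hD))
  have hval : iteratedDeriv 2 h 0 = -2 * p * θ := by
    rw [hform, iteratedDeriv_const_mul_field, iteratedDeriv_fun_sub
      ((contDiff_expSum ..).log hN).contDiffAt ((contDiff_expSum ..).log hD).contDiffAt,
      iteratedDeriv_two_log_expSum_zero hN, iteratedDeriv_two_log_expSum_zero hD, hc]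
    field_simp
    ring
  have hneg : iteratedDeriv 2 h 0 < 0 := by rw [hval]; nlinarith
  obtain ⟨ε, hε, hconc⟩ := hsmooth.exists_strictConcaveOn_Icc_of_iteratedDeriv_two_neg hneg
  exact ⟨hval, hneg, ε, hε, hconc.subset (Icc_subset_Icc (by linarith) (by linarith))
    (convex_Icc _ _)⟩
end

section
/- Fix p_inv ∈ (0,1) and θ > 0, and let h(t) be the transformed distance function of the paired invariants model (as in Eqn. 8 of the paper). Then h is not monotonically increasing on its domain; in particular there exists T > 0 beyond which h is decreasing, and h(t) → 0 as t → ∞. -/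
/-!
Write `h = c · log (1 - f)` with `c = -3(1 - p)/4 < 0` and
`f(t) = e^{-θt}(1 - e^{-at}) / (p + (1 - p)e^{-θt})`, `a = 4/(3(1 - p))`. Since `f < 1` on
`t ≥ 0`, `f(1) > 0` and `f → 0`, we get `h(1) > 0` while `h → 0`, which rules out monotonicity.
The derivative of `f` has the sign of `a e^{-at}(p + (1 - p)e^{-θt}) - θp(1 - e^{-at})`,
negative once `e^{-at} < θp/(a + θp)`; so `f` is eventually decreasing and `h` eventually antitone.
-/

open Filter Real Set Topology

lemma tendsto_exp_neg_mul_atTop_s15 {b : ℝ} (hb : 0 < b) :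
    Tendsto (fun t ↦ exp (-b * t)) atTop (𝓝 0) :=
  tendsto_exp_atBot.comp (tendsto_id.const_mul_atTop_of_neg (neg_neg_of_pos hb))

noncomputable def pairedRatio (p θ a t : ℝ) : ℝ :=
  exp (-θ * t) * (1 - exp (-a * t)) / (p + (1 - p) * exp (-θ * t))

section pairedRatio

variable {p θ a t : ℝ}

lemma pairedRatio_denom_pos (hp₀ : 0 ≤ p) (hp₁ : p ≤ 1) (θ t : ℝ) :
    0 < p + (1 - p) * exp (-θ * t) := by
  rcases hp₀.eq_or_lt with rfl | hp
  · simpa using exp_pos _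
  · have := exp_pos (-θ * t)
    nlinarith

lemma pairedRatio_pos (hp₀ : 0 ≤ p) (hp₁ : p ≤ 1) (ha : 0 < a) (ht : 0 < t) :
    0 < pairedRatio p θ a t := by
  have hv : exp (-a * t) < 1 := exp_lt_one_iff.mpr (by nlinarith)
  exact div_pos (mul_pos (exp_pos _) (by linarith)) (pairedRatio_denom_pos hp₀ hp₁ θ t)

lemma pairedRatio_lt_one (hp₀ : 0 ≤ p) (hp₁ : p ≤ 1) (hθ : 0 ≤ θ) (ht : 0 ≤ t) :
    pairedRatio p θ a t < 1 := by
  rw [pairedRatio, div_lt_one (pairedRatio_denom_pos hp₀ hp₁ θ t)]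
  have hu : exp (-θ * t) ≤ 1 := exp_le_one_iff.mpr (by nlinarith)
  have := mul_pos (exp_pos (-θ * t)) (exp_pos (-a * t))
  nlinarith

lemma tendsto_pairedRatio_atTop (hp : p ≠ 0) (hθ : 0 < θ) (ha : 0 < a) :
    Tendsto (pairedRatio p θ a) atTop (𝓝 0) := by
  have hu := tendsto_exp_neg_mul_atTop_s15 hθ
  have := (hu.mul ((tendsto_exp_neg_mul_atTop_s15 ha).const_sub 1)).div
    ((hu.const_mul (1 - p)).const_add p) (by simpa using hp)
  simp only [sub_zero, mul_one, mul_zero, add_zero, zero_div] at this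
  exact this

lemma hasDerivAt_pairedRatio (hp₀ : 0 ≤ p) (hp₁ : p ≤ 1) (θ a t : ℝ) :
    HasDerivAt (pairedRatio p θ a)
      (-exp (-θ * t) * (θ * p * (1 - exp (-a * t)) -
          a * exp (-a * t) * (p + (1 - p) * exp (-θ * t))) /
        (p + (1 - p) * exp (-θ * t)) ^ 2) t := by
  have hexp : ∀ b : ℝ, HasDerivAt (fun t ↦ exp (-b * t)) (exp (-b * t) * -b) t := fun b ↦ by
    simpa using ((hasDerivAt_id t).const_mul (-b)).exp
  have hden := pairedRatio_denom_pos hp₀ hp₁ θ t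
  refine (((hexp θ).mul ((hexp a).const_sub 1)).div
    ((hexp θ).const_mul (1 - p) |>.const_add p) hden.ne').congr_deriv ?_
  simp only [Pi.mul_apply]
  ring

lemma exists_antitoneOn_Ici_pairedRatio (hp₀ : 0 < p) (hp₁ : p ≤ 1) (hθ : 0 < θ) (ha : 0 < a) :
    ∃ T, 0 < T ∧ AntitoneOn (pairedRatio p θ a) (Ici T) := by
  have hbound : 0 < θ * p / (a + θ * p) := by positivity
  obtain ⟨T₀, hT₀⟩ := eventually_atTop.mp
    ((tendsto_exp_neg_mul_atTop_s15 ha).eventually_lt_const hbound)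
  have hf' := hasDerivAt_pairedRatio hp₀.le hp₁ θ a
  refine ⟨max T₀ 1, by positivity, antitoneOn_of_hasDerivWithinAt_nonpos (convex_Ici _)
    (fun t _ ↦ (hf' t).continuousAt.continuousWithinAt) (fun t _ ↦ (hf' t).hasDerivWithinAt)
    fun t ht ↦ ?_⟩
  rw [interior_Ici, mem_Ioi, max_lt_iff] at ht
  set u := exp (-θ * t)
  set v := exp (-a * t)
  have hu : u ≤ 1 := exp_le_one_iff.mpr (by nlinarith)
  have hv : v * (a + θ * p) < θ * p := (lt_div_iff₀ (by positivity)).mp (hT₀ t ht.1.le)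
  have hv₀ : 0 < v := exp_pos _
  have hnum : a * v * (p + (1 - p) * u) ≤ θ * p * (1 - v) :=
    calc a * v * (p + (1 - p) * u) ≤ a * v * 1 := by gcongr; nlinarith
      _ ≤ θ * p * (1 - v) := by nlinarith
  exact div_nonpos_of_nonpos_of_nonneg
    (mul_nonpos_of_nonpos_of_nonneg (neg_nonpos.mpr (exp_pos _).le) (by linarith)) (sq_nonneg _)

end pairedRatio

lemma antitoneOn_mul_log_one_sub {f : ℝ → ℝ} {s : Set ℝ} {c : ℝ} (hc : c ≤ 0)
    (hf : AntitoneOn f s) (hf₁ : ∀ x ∈ s, f x < 1) :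
    AntitoneOn (fun t ↦ c * log (1 - f t)) s := fun x hx y hy hxy ↦
  mul_le_mul_of_nonpos_left
    (log_le_log (by linarith [hf₁ x hx]) (by linarith [hf hx hy hxy])) hc

lemma not_monotoneOn_Ici_of_tendsto_atTop {f : ℝ → ℝ} {l a x : ℝ}
    (hf : Tendsto f atTop (𝓝 l)) (hax : a ≤ x) (hlx : l < f x) :
    ¬ MonotoneOn f (Ici a) := fun hmono ↦ by
  obtain ⟨y, hy, hxy⟩ := ((hf.eventually_lt_const hlx).and (eventually_ge_atTop x)).exists
  exact (hmono (mem_Ici.mpr hax) (mem_Ici.mpr (hax.trans hxy)) hxy).not_gt hy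

/-- The transformed distance of the paired invariants model is not monotone on
`[0, ∞)`: it is eventually decreasing and tends to 0 at infinity. -/
theorem stmt_15 (p θ : ℝ) (hp : p ∈ Set.Ioo (0 : ℝ) 1) (hθ : 0 < θ)
    (h : ℝ → ℝ)
    (hh : ∀ t, h t = -3 * (1 - p) / 4 *
        Real.log (1 - Real.exp (-θ * t) * (1 - Real.exp (-4 * t / (3 * (1 - p)))) /
          (p + (1 - p) * Real.exp (-θ * t)))) :
    ¬ MonotoneOn h (Set.Ici 0) ∧
      (∃ T : ℝ, 0 < T ∧ AntitoneOn h (Set.Ici T)) ∧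
      Filter.Tendsto h Filter.atTop (nhds 0) := by
  obtain ⟨hp₀, hp₁⟩ := hp
  set a := 4 / (3 * (1 - p)) with ha_def
  have ha : 0 < a := div_pos four_pos (by linarith)
  have hc : -3 * (1 - p) / 4 < 0 := by linarith
  have h_eq : h = fun t ↦ -3 * (1 - p) / 4 * log (1 - pairedRatio p θ a t) := by
    ext t
    rw [hh, pairedRatio, show -4 * t / (3 * (1 - p)) = -a * t by rw [ha_def]; ring]
  have h_tendsto : Tendsto h atTop (𝓝 0) := by
    have := (((tendsto_pairedRatio_atTop hp₀.ne' hθ ha).const_sub 1).log (by norm_num)).const_mul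
      (-3 * (1 - p) / 4)
    rwa [sub_zero, log_one, mul_zero, ← h_eq] at this
  have h_pos : 0 < h 1 := by
    rw [h_eq]
    exact mul_pos_of_neg_of_neg hc <| log_neg
      (by linarith [pairedRatio_lt_one (a := a) hp₀.le hp₁.le hθ.le zero_le_one])
      (by linarith [pairedRatio_pos (θ := θ) hp₀.le hp₁.le ha one_pos])
  obtain ⟨T, hT, hanti⟩ := exists_antitoneOn_Ici_pairedRatio hp₀ hp₁.le hθ ha
  refine ⟨not_monotoneOn_Ici_of_tendsto_atTop h_tendsto zero_le_one h_pos,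
    ⟨T, hT, ?_⟩, h_tendsto⟩
  rw [h_eq]
  exact antitoneOn_mul_log_one_sub hc.le hanti
    fun t ht ↦ pairedRatio_lt_one hp₀.le hp₁.le hθ.le (hT.le.trans ht)
end

section
/- Let d be a dissimilarity on four taxa A, B, C, D of the form d(X,Y) = c·t(X,Y) for a constant c > 0, where t is the path-length metric of a binary four-taxon tree with topology AB|CD and strictly positive branch lengths. Then d(A,B) + d(C,D) < min{d(A,C) + d(B,D), d(A,D) + d(B,C)}, so the neighbor-joining four-point criterion selects the correct topology AB|CD. -/
/-- Pendant branches `a, b, c, d` lead to the tips `A, B, C, D`, and `e` is the internal branch. -/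
theorem stmt_19_general (k a b c d e : ℝ) (hk : 0 < k) (he : 0 < e) :
    k * (a + b) + k * (c + d) <
      min (k * (a + e + c) + k * (b + e + d)) (k * (a + e + d) + k * (b + e + c)) := by
  -- Both wrong pairings cross the internal branch twice, adding exactly `2 * k * e`.
  have hke : 0 < k * e := mul_pos hk he
  exact lt_min (by linarith) (by linarith)

/-- NJ four-point criterion on the true tree `AB|CD` with pendant branch lengths
`a, b, c, d`, internal branch `e`, and distances proportional (factor `k > 0`) to
path lengths: the correct sum is the strict minimum. -/
theorem stmt_19 (k a b c d e : ℝ) (hk : 0 < k)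
    (ha : 0 < a) (hb : 0 < b) (hc : 0 < c) (hd : 0 < d) (he : 0 < e) :
    k * (a + b) + k * (c + d) <
      min (k * (a + e + c) + k * (b + e + d)) (k * (a + e + d) + k * (b + e + c)) :=
  stmt_19_general k a b c d e hk he
end
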